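/- arXiv:1309.1965 — 2 statements merged into one kernel-verified Lean document; each statement's English description precedes it below -/
import Mathlib

section
/- Let W be a vector space over an infinite field K, and let W₀ and W₁ be subspaces of W such that W = W₀ ⊕ W₁ (internal direct sum: W₀ + W₁ = W and W₀ ∩ W₁ = {0}). Let M ⊆ W₀ with M ≠ W₀, 0 ∈ M, and let F = M + W₁ = {m + w : m ∈ M, w ∈ W₁}. Then mL(F) = mL(M) + dim(W₁), where the addition is cardinal addition. -/
open Cardinal

universe u

/-- The additivity number `A(M,W)`: the least element of
`{|F| : F ⊆ W ∧ ∀ w ∈ W, w + F ⊄ M} ∪ {|W|⁺}`. -/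
noncomputable def addNum {W : Type u} [AddCommGroup W] (M : Set W) : Cardinal.{u} :=
  sInf ({κ | ∃ F : Set W, #F = κ ∧ ∀ w : W, ¬ ((fun f => w + f) '' F ⊆ M)} ∪
    {Order.succ #W})

/-- `V` is a maximal linear subspace contained in `M ∪ {0}`. -/
def IsMaxSubspace (K : Type u) {W : Type u} [Field K] [AddCommGroup W] [Module K W]
    (M : Set W) (V : Submodule K W) : Prop :=
  (V : Set W) ⊆ M ∪ {0} ∧ ∀ V' : Submodule K W, V < V' → ¬ ((V' : Set W) ⊆ M ∪ {0})

/-- The maximal lineability number `mL(M)`: the minimum of the dimensions of the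
maximal linear subspaces of `M ∪ {0}`. -/
noncomputable def mL (K : Type u) {W : Type u} [Field K] [AddCommGroup W] [Module K W]
    (M : Set W) : Cardinal.{u} :=
  sInf {κ | ∃ V : Submodule K W, IsMaxSubspace K M V ∧ Module.rank K V = κ}

/-- The lineability number `L(M)`: the least cardinal `κ` such that `M ∪ {0}` contains
no linear subspace of dimension `κ`. -/
noncomputable def linNum (K : Type u) {W : Type u} [Field K] [AddCommGroup W] [Module K W]
    (M : Set W) : Cardinal.{u} :=
  sInf {κ | ¬ ∃ V : Submodule K W, (V : Set W) ⊆ M ∪ {0} ∧ Module.rank K V = κ}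

open Pointwise

/-!
Since `0 ∈ M`, the set `M + W₁` is the preimage of `M` under the projection `W → W₀` along `W₁`.
For a surjective linear map `f` and a set `M ∋ 0`, the maximal subspaces of `f ⁻¹' M` are exactly
the preimages of the maximal subspaces of `M` (a maximal one contains `ker f`, since adding
`ker f` does not leave `f ⁻¹' M`), and taking preimages adds `dim (ker f)` to the dimension.
-/

section

variable (K : Type u) {W : Type u} [Field K] [AddCommGroup W] [Module K W]

lemma exists_isMaxSubspace (M : Set W) : ∃ V : Submodule K W, IsMaxSubspace K M V := by
  obtain ⟨V, -, hV⟩ := zorn_le_nonempty₀ {V : Submodule K W | (V : Set W) ⊆ M ∪ {0}}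
    (fun c hcM hc V₀ hV₀ => ⟨sSup c, fun x hx => by
      obtain ⟨V, hV, hxV⟩ :=
        (Submodule.mem_sSup_of_directed ⟨V₀, hV₀⟩ hc.directedOn).1 hx
      exact hcM hV hxV, fun _ => le_sSup⟩)
    ⊥ (fun x hx => Or.inr ((Submodule.mem_bot K).1 hx))
  exact ⟨V, hV.1, fun V' hlt hV' => hlt.not_ge (hV.2 hV' hlt.le)⟩

lemma isMaxSubspace_iff_of_zero_mem {M : Set W} (h0 : (0 : W) ∈ M) (V : Submodule K W) :
    IsMaxSubspace K M V ↔
      (V : Set W) ⊆ M ∧ ∀ V' : Submodule K W, V < V' → ¬ (V' : Set W) ⊆ M := by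
  rw [IsMaxSubspace, Set.union_singleton, Set.insert_eq_of_mem h0]

end

section

variable {K W V : Type u} [Field K] [AddCommGroup W] [Module K W] [AddCommGroup V] [Module K V]
  {f : W →ₗ[K] V} {M : Set V}

lemma Submodule.coe_map_subset_iff {U : Submodule K W} :
    (U.map f : Set V) ⊆ M ↔ (U : Set W) ⊆ f ⁻¹' M := by
  rw [Submodule.map_coe, Set.image_subset_iff]

lemma IsMaxSubspace.comap_map_eq (h0 : (0 : V) ∈ M) {U : Submodule K W}
    (hU : IsMaxSubspace K (f ⁻¹' M) U) : (U.map f).comap f = U := by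
  rw [isMaxSubspace_iff_of_zero_mem K (show (0 : W) ∈ f ⁻¹' M by simpa using h0)] at hU
  by_contra hne
  exact hU.2 _ ((Submodule.le_comap_map f U).lt_of_ne' hne)
    (Set.preimage_mono (Submodule.coe_map_subset_iff.2 hU.1))

lemma isMaxSubspace_comap_iff (hf : Function.Surjective f) (h0 : (0 : V) ∈ M)
    (S : Submodule K V) : IsMaxSubspace K (f ⁻¹' M) (S.comap f) ↔ IsMaxSubspace K M S := by
  rw [isMaxSubspace_iff_of_zero_mem K (show (0 : W) ∈ f ⁻¹' M by simpa using h0),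
    isMaxSubspace_iff_of_zero_mem K h0, Submodule.comap_coe, hf.preimage_subset_preimage_iff]
  refine and_congr_right fun _ => ⟨fun hU S' hlt hS' => ?_, fun hS U' hlt hU' => ?_⟩
  · exact hU _ ((Submodule.comap_lt_comap_iff_of_surjective hf).2 hlt)
      (by rwa [Submodule.comap_coe, hf.preimage_subset_preimage_iff])
  · refine hS (U'.map f) (lt_of_le_of_ne ?_ fun hSU => hlt.not_ge ?_)
      (Submodule.coe_map_subset_iff.2 hU')
    · exact (Submodule.map_comap_eq_of_surjective hf S).ge.trans (Submodule.map_mono hlt.le)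
    · exact hSU ▸ Submodule.le_comap_map f U'

lemma LinearMap.rank_comap_of_surjective (hf : Function.Surjective f) (S : Submodule K V) :
    Module.rank K (S.comap f) = Module.rank K S + Module.rank K (LinearMap.ker f) := by
  let g : S.comap f →ₗ[K] S := f.restrict fun _ hx => hx
  have hg : Function.Surjective g := fun y => by
    obtain ⟨x, hx⟩ := hf y
    exact ⟨⟨x, by simp [hx]⟩, Subtype.ext hx⟩
  have hker : LinearMap.ker g = (LinearMap.ker f).comap (S.comap f).subtype :=
    LinearMap.ker_restrict _
  rw [LinearMap.rank_eq_of_surjective hg, hker,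
    (Submodule.comapSubtypeEquivOfLe (LinearMap.ker_le_comap f)).rank_eq]

end

lemma Cardinal.sInf_image_add_right {S : Set Cardinal.{u}} (hS : S.Nonempty) (c : Cardinal.{u}) :
    sInf ((· + c) '' S) = sInf S + c :=
  le_antisymm (csInf_le' ⟨_, csInf_mem hS, rfl⟩)
    (le_csInf (hS.image _) fun _ ⟨_, hκ, hκc⟩ => hκc ▸ add_le_add_left (csInf_le' hκ) c)

theorem mL_preimage_of_surjective {K W V : Type u} [Field K] [AddCommGroup W] [Module K W]
    [AddCommGroup V] [Module K V] {f : W →ₗ[K] V} (hf : Function.Surjective f) {M : Set V}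
    (h0 : (0 : V) ∈ M) : mL K (f ⁻¹' M) = mL K M + Module.rank K (LinearMap.ker f) := by
  have hranks : {κ | ∃ U : Submodule K W, IsMaxSubspace K (f ⁻¹' M) U ∧ Module.rank K U = κ} =
      (· + Module.rank K (LinearMap.ker f)) ''
        {κ | ∃ S : Submodule K V, IsMaxSubspace K M S ∧ Module.rank K S = κ} := by
    ext κ
    constructor
    · rintro ⟨U, hU, rfl⟩
      have hUS := hU.comap_map_eq h0
      rw [← hUS, isMaxSubspace_comap_iff hf h0] at hU
      refine ⟨_, ⟨_, hU, rfl⟩, ?_⟩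
      dsimp only
      rw [← LinearMap.rank_comap_of_surjective hf, hUS]
    · rintro ⟨_, ⟨S, hS, rfl⟩, rfl⟩
      exact ⟨S.comap f, (isMaxSubspace_comap_iff hf h0 S).2 hS,
        LinearMap.rank_comap_of_surjective hf S⟩
  have hne : {κ | ∃ S : Submodule K V, IsMaxSubspace K M S ∧ Module.rank K S = κ}.Nonempty :=
    let ⟨S, hS⟩ := exists_isMaxSubspace K M
    ⟨_, S, hS, rfl⟩
  rw [mL, hranks, Cardinal.sInf_image_add_right hne]
  rfl

lemma Submodule.add_eq_preimage_projectionOnto {K W : Type u} [Field K] [AddCommGroup W]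
    [Module K W] {W₀ W₁ : Submodule K W} (h : IsCompl W₀ W₁) {M : Set W} (hM : M ⊆ W₀) :
    M + (W₁ : Set W) = W₀.projectionOnto W₁ h ⁻¹' (Subtype.val ⁻¹' M) := by
  ext x
  refine ⟨?_, fun hx => ⟨_, hx, _, (W₁.projectionOnto W₀ h.symm x).2,
    W₀.projection_add_projection_eq_self h x⟩⟩
  rintro ⟨m, hm, w, hw, rfl⟩
  simpa [Submodule.projectionOnto_apply_of_mem_left h (hM hm),
    Submodule.projectionOnto_apply_of_mem_right h hw] using hm

theorem stmt7_general {K W : Type u} [Field K] [AddCommGroup W] [Module K W]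
    (W₀ W₁ : Submodule K W) (hsup : W₀ ⊔ W₁ = ⊤) (hinf : W₀ ⊓ W₁ = ⊥)
    (M : Set W) (hM : M ⊆ (W₀ : Set W)) (h0 : (0 : W) ∈ M) :
    mL K (M + (W₁ : Set W)) = mL K (Subtype.val ⁻¹' M : Set W₀) + Module.rank K W₁ := by
  have h : IsCompl W₀ W₁ := ⟨disjoint_iff.2 hinf, codisjoint_iff.2 hsup⟩
  rw [Submodule.add_eq_preimage_projectionOnto h hM,
    mL_preimage_of_surjective (W₀.projectionOnto_surjective h) (show (0 : W₀) ∈ _ from h0),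
    Submodule.ker_projectionOnto]

theorem stmt7 {K W : Type u} [Field K] [Infinite K] [AddCommGroup W] [Module K W]
    (W₀ W₁ : Submodule K W) (hsup : W₀ ⊔ W₁ = ⊤) (hinf : W₀ ⊓ W₁ = ⊥)
    (M : Set W) (hM : M ⊆ (W₀ : Set W)) (hMne : M ≠ (W₀ : Set W)) (h0 : (0 : W) ∈ M) :
    mL K (M + (W₁ : Set W)) = mL K (Subtype.val ⁻¹' M : Set W₀) + Module.rank K W₁ :=
  stmt7_general W₀ W₁ hsup hinf M hM h0
end

section
/- Let W be a vector space over an infinite field K with dim(W) ≥ 2^|K|, and let κ be a cardinal with 2 ≤ κ ≤ |W|. Then there exists a star-like subset F ⊊ W containing 0 such that A(F,W) = κ and mL(F) = dim(W) (so that L(F) = dim(W)⁺). -/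
open Cardinal

universe u

/-- The star of `M`: the set of `w` such that `c • w ∈ M` for every nonzero scalar `c`. -/
def starSet (K : Type u) {W : Type u} [Field K] [AddCommGroup W] [Module K W]
    (M : Set W) : Set W :=
  {w | ∀ c : K, c ≠ 0 → c • w ∈ M}

/-- `M` is star-like provided `st(M) = M`. -/
def StarLike (K : Type u) {W : Type u} [Field K] [AddCommGroup W] [Module K W]
    (M : Set W) : Prop :=
  starSet K M = M

/-!
Take a linear surjection `q : W → V` whose kernel has dimension `dim W`, and a set `F' ⊆ V` that is
closed under nonzero scalars and contains a hyperplane `ker φ`; put `F = q⁻¹ F'`. As a union of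
cosets of `ker q`, `F` forces every maximal subspace of `F ∪ {0}` to contain `ker q`, so all of them
have dimension `dim W`, and `ker (φ ∘ q)` is one of them. Translates behave the same in `V` and in
`W`, so `A(F, W) = κ` reduces to: every set of size `< κ` has a translate inside `F'`, and some set
of size `κ` has none.

* If `κ ≤ |K|`, let `V` be the functions `ι → K` with fewer than `max ℵ₀ κ` values, where `|ι| = κ`
  for infinite `κ` and `|ι| = κ - 1` for finite `κ`, and let `F'` consist of the functions vanishing
  somewhere. Fewer than `κ` functions are moved into `F'` one coordinate each; the constants `-b`,
  `b ∈ B` with `|B| = κ`, are not, since a function with fewer than `κ` values misses some `b ∈ B`.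
  Here `dim V ≤ |K| ^ |K| = 2 ^ |K|`, which is where `dim W ≥ 2 ^ |K|` enters.
* If `|K| < κ`, let `V = K^(κ)` and let `F'` be the complement of a punctured line `K^× v`. Fewer
  than `κ` vectors are translated off the line by any `w` outside the `< κ` translates of the line
  they determine, while `V` itself, of size `κ`, has no translate inside `F'`.
-/

open Set Function Submodule

section Translates

variable {V W : Type u} [AddCommGroup V] [AddCommGroup W]

theorem addNum_eq {M : Set W} {κ : Cardinal.{u}} (hκ : κ ≤ #W)
    (hsmall : ∀ S : Set W, #S < κ → ∃ w, ∀ s ∈ S, w + s ∈ M)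
    (hlarge : ∃ S : Set W, #S = κ ∧ ∀ w, ∃ s ∈ S, w + s ∉ M) :
    addNum M = κ := by
  obtain ⟨S, hS, hSM⟩ := hlarge
  apply le_antisymm
  · refine csInf_le' (Or.inl ⟨S, hS, fun w hw => ?_⟩)
    obtain ⟨s, hs, hws⟩ := hSM w
    exact hws (hw (mem_image_of_mem _ hs))
  · refine le_csInf ⟨_, Or.inr rfl⟩ ?_
    rintro _ (⟨T, rfl, hT⟩ | rfl)
    · by_contra! hTκ
      obtain ⟨w, hw⟩ := hsmall T hTκ
      exact hT w (image_subset_iff.2 hw)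
    · exact hκ.trans (Order.le_succ _)

variable {G : Type*} [FunLike G W V] [AddHomClass G W V] {q : G} {M : Set V} {κ : Cardinal.{u}}

theorem exists_add_mem_preimage (hq : Surjective q)
    (hsmall : ∀ S : Set V, #S < κ → ∃ v, ∀ s ∈ S, v + s ∈ M) :
    ∀ S : Set W, #S < κ → ∃ w, ∀ s ∈ S, w + s ∈ q ⁻¹' M := by
  intro S hS
  obtain ⟨v, hv⟩ := hsmall (q '' S) (mk_image_le.trans_lt hS)
  obtain ⟨w, rfl⟩ := hq v
  exact ⟨w, fun s hs => by simpa only [mem_preimage, map_add] using hv _ (mem_image_of_mem q hs)⟩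

theorem exists_add_notMem_preimage (hq : Surjective q)
    (hlarge : ∃ S : Set V, #S = κ ∧ ∀ v, ∃ s ∈ S, v + s ∉ M) :
    ∃ S : Set W, #S = κ ∧ ∀ w, ∃ s ∈ S, w + s ∉ q ⁻¹' M := by
  obtain ⟨S, hS, hSM⟩ := hlarge
  refine ⟨surjInv hq '' S, by rw [mk_image_eq (injective_surjInv hq), hS], fun w => ?_⟩
  obtain ⟨s, hs, hws⟩ := hSM (q w)
  exact ⟨_, mem_image_of_mem _ hs, by simpa only [mem_preimage, map_add, surjInv_eq hq] using hws⟩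

end Translates

section Subspaces

variable {K W : Type u} [Field K] [AddCommGroup W] [Module K W] {M : Set W}

theorem starLike_of_smul_mem (h : ∀ c : K, c ≠ 0 → ∀ x ∈ M, c • x ∈ M) : StarLike K M :=
  (Set.ext fun x => ⟨fun hx => one_smul K x ▸ hx 1 one_ne_zero, fun hx c hc => h c hc x hx⟩ :
    starSet K M = M)

theorem IsMaxSubspace.le_of_add_mem {N V : Submodule K W} (hV : IsMaxSubspace K M V)
    (h0 : (0 : W) ∈ M) (hMN : ∀ x ∈ M, ∀ n ∈ N, x + n ∈ M) : N ≤ V := by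
  by_contra hNV
  refine hV.2 (V ⊔ N) (left_lt_sup.2 hNV) fun x hx => ?_
  obtain ⟨y, hy, n, hn, rfl⟩ := mem_sup.1 hx
  have hyM : y ∈ M := by
    rcases hV.1 hy with hyM | rfl
    exacts [hyM, h0]
  exact Or.inl (hMN y hyM n hn)

theorem IsMaxSubspace.rank_eq {N V : Submodule K W} (hV : IsMaxSubspace K M V)
    (h0 : (0 : W) ∈ M) (hMN : ∀ x ∈ M, ∀ n ∈ N, x + n ∈ M)
    (hN : Module.rank K N = Module.rank K W) : Module.rank K V = Module.rank K W :=
  le_antisymm V.rank_le (hN ▸ Submodule.rank_mono (hV.le_of_add_mem h0 hMN))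

theorem isMaxSubspace_ker {ψ : W →ₗ[K] K} (hψ : Surjective ψ)
    (hψM : (LinearMap.ker ψ : Set W) ⊆ M) (hM : M ∪ {0} ≠ Set.univ) :
    IsMaxSubspace K M (LinearMap.ker ψ) := by
  refine ⟨hψM.trans subset_union_left, fun V hV hVM => hM (univ_subset_iff.1 ?_)⟩
  rwa [(LinearMap.isCoatom_ker_of_surjective hψ).2 V hV, top_coe] at hVM

theorem mL_eq_rank {N V : Submodule K W} (h0 : (0 : W) ∈ M)
    (hMN : ∀ x ∈ M, ∀ n ∈ N, x + n ∈ M) (hN : Module.rank K N = Module.rank K W)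
    (hV : IsMaxSubspace K M V) : mL K M = Module.rank K W := by
  have : {c | ∃ V, IsMaxSubspace K M V ∧ Module.rank K V = c} = {Module.rank K W} :=
    eq_singleton_iff_unique_mem.2 ⟨⟨V, hV, hV.rank_eq h0 hMN hN⟩,
      fun _ ⟨_, hV', hc⟩ => hc ▸ hV'.rank_eq h0 hMN hN⟩
  rw [mL, this, csInf_singleton]

theorem Submodule.exists_le_rank_eq {V : Submodule K W} {c : Cardinal.{u}}
    (hc : c ≤ Module.rank K V) : ∃ U ≤ V, Module.rank K U = c := by
  obtain ⟨s, hs, hli⟩ := le_rank_iff_exists_linearIndependent.1 hc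
  refine ⟨span K (V.subtype '' s), span_le.2 ?_, ?_⟩
  · rintro _ ⟨x, -, rfl⟩
    exact x.2
  · rw [rank_span_set (hli.image (by simp)), mk_image_eq V.injective_subtype, hs]

theorem linNum_eq_succ_rank {V : Submodule K W} (hVM : (V : Set W) ⊆ M ∪ {0})
    (hV : Module.rank K V = Module.rank K W) :
    linNum K M = Order.succ (Module.rank K W) := by
  have hsucc : Order.succ (Module.rank K W) ∈
      {c | ¬ ∃ U : Submodule K W, (U : Set W) ⊆ M ∪ {0} ∧ Module.rank K U = c} :=
    fun ⟨U, _, hU⟩ => (Order.lt_succ _).not_ge (hU ▸ U.rank_le)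
  refine le_antisymm (csInf_le' hsucc) (le_csInf ⟨_, hsucc⟩ fun c hc => ?_)
  by_contra! hc_lt
  obtain ⟨U, hUV, hU⟩ := V.exists_le_rank_eq ((Order.lt_succ_iff.1 hc_lt).trans hV.ge)
  exact hc ⟨U, (SetLike.coe_subset_coe.2 hUV).trans hVM, hU⟩

theorem exists_surjective_rank_ker_eq {V : Type u} [AddCommGroup V] [Module K V]
    (hW : ℵ₀ ≤ Module.rank K W) (hVW : Module.rank K V ≤ Module.rank K W) :
    ∃ q : W →ₗ[K] V, Surjective q ∧ Module.rank K (LinearMap.ker q) = Module.rank K W := by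
  let e : W ≃ₗ[K] V × W := .ofRankEq _ _ (by rw [rank_prod', add_eq_right hW hVW])
  refine ⟨LinearMap.fst K V W ∘ₗ e.toLinearMap, Prod.fst_surjective.comp e.surjective,
    le_antisymm (Submodule.rank_le _) ?_⟩
  have hker : (LinearMap.range (LinearMap.inr K V W)).map e.symm.toLinearMap ≤
      LinearMap.ker (LinearMap.fst K V W ∘ₗ e.toLinearMap) := by
    rintro _ ⟨_, ⟨w, rfl⟩, rfl⟩
    simp
  calc Module.rank K W = Module.rank K (LinearMap.range (LinearMap.inr K V W)) :=
        (rank_range_of_injective _ LinearMap.inr_injective).symm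
    _ = _ := (e.symm.rank_map_eq _).symm
    _ ≤ _ := Submodule.rank_mono hker

end Subspaces

section Model

variable {K W : Type u} [Field K] [AddCommGroup W] [Module K W]

theorem exists_starLike_of_model {V : Type u} [AddCommGroup V] [Module K V]
    (hW : ℵ₀ ≤ Module.rank K W) (hVW : Module.rank K V ≤ Module.rank K W)
    {F' : Set V} (hsmul : ∀ c : K, c ≠ 0 → ∀ x ∈ F', c • x ∈ F')
    {φ : V →ₗ[K] K} (hφ : Surjective φ) (hφF : (LinearMap.ker φ : Set V) ⊆ F')
    {κ : Cardinal.{u}} (hκ : κ ≤ #W)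
    (hsmall : ∀ S : Set V, #S < κ → ∃ v, ∀ s ∈ S, v + s ∈ F')
    (hlarge : ∃ S : Set V, #S = κ ∧ ∀ v, ∃ s ∈ S, v + s ∉ F') :
    ∃ F : Set W, F ≠ Set.univ ∧ (0 : W) ∈ F ∧ StarLike K F ∧
      addNum F = κ ∧ mL K F = Module.rank K W ∧
      linNum K F = Order.succ (Module.rank K W) := by
  obtain ⟨q, hq, hker⟩ := exists_surjective_rank_ker_eq hW hVW
  have h0 : (0 : W) ∈ q ⁻¹' F' := by simpa using hφF (zero_mem _)
  have hlarge' := exists_add_notMem_preimage hq hlarge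
  have hF : q ⁻¹' F' ≠ Set.univ := by
    obtain ⟨S, -, hS⟩ := hlarge'
    obtain ⟨s, -, hs⟩ := hS 0
    exact fun h => hs (h ▸ mem_univ _)
  have hkerF : ∀ x ∈ q ⁻¹' F', ∀ n ∈ LinearMap.ker q, x + n ∈ q ⁻¹' F' := fun x hx n hn => by
    simpa [LinearMap.mem_ker.1 hn] using hx
  have hmax : IsMaxSubspace K (q ⁻¹' F') (LinearMap.ker (φ ∘ₗ q)) :=
    isMaxSubspace_ker (hφ.comp hq) (fun x hx => hφF hx)
      (by rwa [union_singleton, insert_eq_of_mem h0])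
  exact ⟨q ⁻¹' F', hF, h0, starLike_of_smul_mem fun c hc x hx => by simpa using hsmul c hc _ hx,
    addNum_eq hκ (exists_add_mem_preimage hq hsmall) hlarge', mL_eq_rank h0 hkerF hker hmax,
    linNum_eq_succ_rank hmax.1 (hmax.rank_eq h0 hkerF hker)⟩

end Model

section SmallRange

theorem mk_range_const_lt_aleph0 {α ι : Type u} (c : α) : #(range fun _ : ι => c) < ℵ₀ :=
  ((finite_singleton c).subset range_const_subset).lt_aleph0

variable (K : Type u) [Field K] (ι : Type u) (κ : Cardinal.{u})

def smallRangeFunctions : Submodule K (ι → K) where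
  carrier := {f | #(range f) < ℵ₀ ⊔ κ}
  add_mem' {f g} hf hg := by
    have hsub : range (f + g) ⊆ image2 (· + ·) (range f) (range g) := by
      rintro _ ⟨i, rfl⟩
      exact mem_image2_of_mem (mem_range_self i) (mem_range_self i)
    exact ((mk_le_mk_of_subset hsub).trans mk_image2_le).trans_lt (mul_lt_of_lt le_sup_left hf hg)
  zero_mem' := (mk_range_const_lt_aleph0 (ι := ι) (0 : K)).trans_le le_sup_left
  smul_mem' c f hf := by
    have hsub : range (c • f) ⊆ (c • ·) '' range f := by
      rintro _ ⟨i, rfl⟩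
      exact mem_image_of_mem _ (mem_range_self i)
    exact (mk_le_mk_of_subset hsub).trans_lt (mk_image_le.trans_lt hf)

def vanishingSomewhere : Set (smallRangeFunctions K ι κ) :=
  {f | ∃ i, (f : ι → K) i = 0}

variable {K ι κ}

theorem const_mem_smallRangeFunctions (c : K) : (fun _ => c) ∈ smallRangeFunctions K ι κ :=
  (mk_range_const_lt_aleph0 c).trans_le le_sup_left

theorem rank_smallRangeFunctions_le [Infinite K] (hιK : #ι ≤ #K) :
    Module.rank K (smallRangeFunctions K ι κ) ≤ 2 ^ #K :=
  calc Module.rank K (smallRangeFunctions K ι κ) ≤ Module.rank K (ι → K) := Submodule.rank_le _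
    _ ≤ #(ι → K) := rank_le_card K _
    _ = #K ^ #ι := (power_def K ι).symm
    _ ≤ #K ^ #K := power_le_power_left (mk_ne_zero K) hιK
    _ = 2 ^ #K := power_self_eq (aleph0_le_mk K)

theorem mk_range_lt_of_smallRangeFunctions (hκ : ℵ₀ ≤ κ ∨ #ι < κ) (f : smallRangeFunctions K ι κ) :
    #(range (f : ι → K)) < κ := by
  rcases hκ with hκ | hι
  · have hf : #(range (f : ι → K)) < ℵ₀ ⊔ κ := f.2
    rwa [sup_eq_right.2 hκ] at hf
  · exact mk_range_le.trans_lt hι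

theorem smul_mem_vanishingSomewhere (c : K) {f : smallRangeFunctions K ι κ}
    (hf : f ∈ vanishingSomewhere K ι κ) : c • f ∈ vanishingSomewhere K ι κ := by
  obtain ⟨i, hi⟩ := hf
  exact ⟨i, by simp [hi]⟩

theorem exists_add_mem_vanishingSomewhere (hι : ∀ μ < κ, μ ≤ #ι) :
    ∀ S : Set (smallRangeFunctions K ι κ), #S < κ →
      ∃ w, ∀ s ∈ S, w + s ∈ vanishingSomewhere K ι κ := by
  intro S hS
  obtain ⟨g⟩ : Nonempty (S ↪ ι) := le_def _ _ |>.1 (hι _ hS)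
  let w : ι → K := extend g (fun s : S => -(s : ι → K) (g s)) 0
  have hw : w ∈ smallRangeFunctions K ι κ := by
    have hzero : ((0 : ι → K) '' (range g)ᶜ).Finite :=
      (finite_singleton 0).subset (by rintro _ ⟨_, -, rfl⟩; rfl)
    refine (mk_le_mk_of_subset (range_extend_subset _ _ _)).trans_lt
      ((mk_union_le _ _).trans_lt (add_lt_of_lt le_sup_left ?_ ?_))
    · exact mk_range_le.trans_lt (hS.trans_le le_sup_right)
    · exact hzero.lt_aleph0.trans_le le_sup_left
  refine ⟨⟨w, hw⟩, fun s hs => ⟨g ⟨s, hs⟩, ?_⟩⟩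
  simp [w, g.injective.extend_apply]

theorem exists_add_notMem_vanishingSomewhere [Nonempty ι] (hκK : κ ≤ #K)
    (hκ : ℵ₀ ≤ κ ∨ #ι < κ) :
    ∃ S : Set (smallRangeFunctions K ι κ), #S = κ ∧
      ∀ w, ∃ s ∈ S, w + s ∉ vanishingSomewhere K ι κ := by
  obtain ⟨B, hB⟩ := le_mk_iff_exists_set.1 hκK
  let negConst : K → smallRangeFunctions K ι κ := fun b =>
    ⟨fun _ => -b, const_mem_smallRangeFunctions _⟩
  have hinj : Injective negConst := fun a b h =>
    neg_injective (congr_fun (congr_arg Subtype.val h) (Classical.arbitrary ι))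
  refine ⟨negConst '' B, by rw [mk_image_eq hinj, hB], fun w => ?_⟩
  obtain ⟨b, hbB, hbw⟩ : ∃ b ∈ B, b ∉ range (w : ι → K) := by
    by_contra! h
    exact (mk_range_lt_of_smallRangeFunctions hκ w).not_ge (hB.ge.trans (mk_le_mk_of_subset h))
  refine ⟨negConst b, mem_image_of_mem _ hbB, fun ⟨i, hi⟩ => hbw ⟨i, ?_⟩⟩
  exact add_neg_eq_zero.1 hi

end SmallRange

theorem exists_index_type_of_two_le {κ : Cardinal.{u}} (h2 : 2 ≤ κ) :
    ∃ ι : Type u, Nonempty ι ∧ #ι ≤ κ ∧ (∀ μ < κ, μ ≤ #ι) ∧ (ℵ₀ ≤ κ ∨ #ι < κ) := by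
  by_cases hκ : ℵ₀ ≤ κ
  · refine ⟨κ.out, mk_ne_zero_iff.1 ?_, (mk_out κ).le, fun μ hμ => hμ.le.trans (mk_out κ).ge,
      Or.inl hκ⟩
    rw [mk_out]
    exact (two_pos.trans_le h2).ne'
  · obtain ⟨n, rfl⟩ := lt_aleph0.1 (not_le.1 hκ)
    have hn : 2 ≤ n := by exact_mod_cast h2
    obtain ⟨m, rfl⟩ : ∃ m, n = m + 1 := ⟨n - 1, by omega⟩
    have hm : #(ULift.{u} (Fin m)) = m := by simp
    refine ⟨ULift (Fin m), ⟨⟨⟨0, ?_⟩⟩⟩, ?_, fun μ hμ => ?_, Or.inr ?_⟩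
    · omega
    · rw [hm]
      exact_mod_cast m.le_succ
    · rw [Nat.cast_succ, ← succ_natCast] at hμ
      exact hm ▸ Order.lt_succ_iff.1 hμ
    · rw [hm]
      exact_mod_cast m.lt_succ_self

section PuncturedLine

variable {K V : Type u} [Field K] [AddCommGroup V] [Module K V]

def puncturedLine (K : Type u) [Field K] [Module K V] (v : V) : Set V :=
  {x | ∃ c : K, c ≠ 0 ∧ c • v = x}

theorem smul_mem_puncturedLine_compl {v : V} {c : K} (hc : c ≠ 0) {x : V}
    (hx : x ∈ (puncturedLine K v)ᶜ) : c • x ∈ (puncturedLine K v)ᶜ := by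
  rintro ⟨d, hd, hdx⟩
  exact hx ⟨c⁻¹ * d, mul_ne_zero (inv_ne_zero hc) hd, by rw [mul_smul, hdx, inv_smul_smul₀ hc]⟩

theorem ker_subset_puncturedLine_compl {v : V} {φ : V →ₗ[K] K} (hφ : φ v ≠ 0) :
    (LinearMap.ker φ : Set V) ⊆ (puncturedLine K v)ᶜ := by
  rintro _ hx ⟨c, hc, rfl⟩
  exact mul_ne_zero hc hφ (by simpa using hx)

theorem exists_add_mem_puncturedLine_compl [Infinite K] (v : V) {κ : Cardinal.{u}}
    (hKκ : #K < κ) (hκV : κ ≤ #V) :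
    ∀ S : Set V, #S < κ → ∃ w, ∀ s ∈ S, w + s ∈ (puncturedLine K v)ᶜ := by
  intro S hS
  let A : Set V := range fun p : S × K => p.2 • v - p.1
  have hA : #A < #V := by
    refine mk_range_le.trans_lt ?_
    rw [mk_prod, lift_id, lift_id]
    exact (mul_lt_of_lt ((aleph0_le_mk K).trans hKκ.le) hS hKκ).trans_le hκV
  obtain ⟨w, hw⟩ : ∃ w, w ∉ A := by
    by_contra! h
    exact hA.ne (by rw [eq_univ_of_forall h, mk_univ])
  exact ⟨w, fun s hs ⟨c, _, hc⟩ => hw ⟨(⟨s, hs⟩, c), (eq_sub_of_add_eq hc.symm).symm⟩⟩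

end PuncturedLine

section Cases

variable {K W : Type u} [Field K] [Infinite K] [AddCommGroup W] [Module K W] {κ : Cardinal.{u}}

theorem exists_starLike_of_le_card (hdim : 2 ^ #K ≤ Module.rank K W) (h2 : 2 ≤ κ)
    (hκ : κ ≤ #W) (hκK : κ ≤ #K) :
    ∃ F : Set W, F ≠ Set.univ ∧ (0 : W) ∈ F ∧ StarLike K F ∧
      addNum F = κ ∧ mL K F = Module.rank K W ∧
      linNum K F = Order.succ (Module.rank K W) := by
  obtain ⟨ι, hι, hικ, hsmall, hlarge⟩ := exists_index_type_of_two_le h2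
  let i₀ : ι := Classical.arbitrary ι
  exact exists_starLike_of_model
    (φ := (LinearMap.proj i₀ : (ι → K) →ₗ[K] K) ∘ₗ (smallRangeFunctions K ι κ).subtype)
    ((aleph0_le_mk K).trans ((cantor _).le.trans hdim))
    ((rank_smallRangeFunctions_le (hικ.trans hκK)).trans hdim)
    (fun c _ _ => smul_mem_vanishingSomewhere c)
    (fun c => ⟨⟨fun _ => c, const_mem_smallRangeFunctions c⟩, rfl⟩) (fun _ hf => ⟨i₀, hf⟩)
    hκ (exists_add_mem_vanishingSomewhere hsmall)
    (exists_add_notMem_vanishingSomewhere hκK hlarge)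

theorem exists_starLike_of_card_lt (hκ : κ ≤ #W) (hKκ : #K < κ) :
    ∃ F : Set W, F ≠ Set.univ ∧ (0 : W) ∈ F ∧ StarLike K F ∧
      addNum F = κ ∧ mL K F = Module.rank K W ∧
      linNum K F = Order.succ (Module.rank K W) := by
  have hι : #κ.out = κ := mk_out κ
  have : Infinite κ.out := infinite_iff.2 (by rw [hι]; exact (aleph0_le_mk K).trans hKκ.le)
  let i₀ : κ.out := Classical.arbitrary _
  have hrankW : Module.rank K W = #W :=
    Module.Free.rank_eq_mk_of_infinite_lt K W (by simpa using hKκ.trans_le hκ)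
  have hcardV : #(κ.out →₀ K) = κ := by rw [mk_finsupp_of_infinite, hι, max_eq_left hKκ.le]
  refine exists_starLike_of_model (hrankW ▸ (aleph0_le_mk K).trans (hKκ.le.trans hκ))
    (by rw [rank_finsupp_self, lift_id, hι, hrankW]; exact hκ)
    (fun c hc x hx => smul_mem_puncturedLine_compl hc hx) (φ := Finsupp.lapply i₀)
    (fun c => ⟨Finsupp.single i₀ c, by simp⟩)
    (ker_subset_puncturedLine_compl (v := Finsupp.single i₀ 1) (by simp)) hκ
    (exists_add_mem_puncturedLine_compl _ hKκ hcardV.ge)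
    ⟨Set.univ, by rw [mk_univ, hcardV], fun w => ⟨Finsupp.single i₀ 1 - w, trivial, ?_⟩⟩
  exact fun h => h ⟨1, one_ne_zero, by simp⟩

end Cases

theorem stmt10 {K W : Type u} [Field K] [Infinite K] [AddCommGroup W] [Module K W]
    (hdim : 2 ^ #K ≤ Module.rank K W)
    (κ : Cardinal.{u}) (h2 : 2 ≤ κ) (hκ : κ ≤ #W) :
    ∃ F : Set W, F ≠ Set.univ ∧ (0 : W) ∈ F ∧ StarLike K F ∧
      addNum F = κ ∧ mL K F = Module.rank K W ∧
      linNum K F = Order.succ (Module.rank K W) := by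
  rcases le_or_gt κ #K with hκK | hKκ
  · exact exists_starLike_of_le_card hdim h2 hκ hκK
  · exact exists_starLike_of_card_lt hκ hKκ
end
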